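/- arXiv:1712.05953 — 2 statements merged into one kernel-verified Lean document; each statement's English description precedes it below -/
import Mathlib

section
/- Define sequences by z1(0) = z2(0) = z3(0) = 0 and z1(t+1) = z1(t)^2 - 3/4, z2(t+1) = (-z1(t) + z2(t))^2 - 3/4, z3(t+1) = (z1(t) + z2(t) - z3(t))^2 - 3/4. Then for all t, z1(t) ∈ [-3/4, 0] and z2(t) ∈ [-3/4, 0]. -/
theorem first_two_nodes_bounded (z1 z2 z3 : ℕ → ℝ)
    (h10 : z1 0 = 0) (h20 : z2 0 = 0) (h30 : z3 0 = 0)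
    (h1 : ∀ t, z1 (t + 1) = (z1 t) ^ 2 - 3/4)
    (h2 : ∀ t, z2 (t + 1) = (-z1 t + z2 t) ^ 2 - 3/4)
    (h3 : ∀ t, z3 (t + 1) = (z1 t + z2 t - z3 t) ^ 2 - 3/4) :
    ∀ t, z1 t ∈ Set.Icc (-3/4 : ℝ) 0 ∧ z2 t ∈ Set.Icc (-3/4 : ℝ) 0 := by
  intro t
  induction t with
  | zero => norm_num [h10, h20]
  | succ n ih =>
    obtain ⟨⟨a1, b1⟩, ⟨a2, b2⟩⟩ := ih
    rw [h1, h2]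
    simp only [Set.mem_Icc] at *
    refine ⟨⟨?_, ?_⟩, ?_, ?_⟩ <;> nlinarith
end

section
/- Define sequences by z1(0) = z2(0) = z3(0) = 0 and z1(t+1) = z1(t)^2 - 3/4, z2(t+1) = (-z1(t) + z2(t))^2 - 3/4, z3(t+1) = (z1(t) + z2(t) - z3(t))^2 - 3/4. Then the sequence z3(t) is unbounded. -/
set_option maxHeartbeats 1000000 in

theorem third_node_unbounded (z1 z2 z3 : ℕ → ℝ)
    (h10 : z1 0 = 0) (h20 : z2 0 = 0) (h30 : z3 0 = 0)
    (h1 : ∀ t, z1 (t + 1) = (z1 t) ^ 2 - 3/4)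
    (h2 : ∀ t, z2 (t + 1) = (-z1 t + z2 t) ^ 2 - 3/4)
    (h3 : ∀ t, z3 (t + 1) = (z1 t + z2 t - z3 t) ^ 2 - 3/4) :
    ¬ ∃ B : ℝ, ∀ t, |z3 t| ≤ B := by
  -- invariant: z1, z2 stay in [-3/4, 0]
  have inv : ∀ t, (-3/4 ≤ z1 t ∧ z1 t ≤ 0) ∧ (-3/4 ≤ z2 t ∧ z2 t ≤ 0) := by
    intro t
    induction t with
    | zero => rw [h10, h20]; norm_num
    | succ n ih =>
      obtain ⟨⟨a1, a2⟩, b1, b2⟩ := ih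
      rw [h1, h2]
      constructor <;> constructor <;> nlinarith [sq_nonneg (z1 n), sq_nonneg (-z1 n + z2 n), sq_nonneg (z1 n + 3/4), sq_nonneg (-z1 n + z2 n + 3/4)]
  -- growth step
  have step : ∀ t, 6 ≤ z3 t → z3 t + 1 ≤ z3 (t + 1) := by
    intro t ht
    obtain ⟨⟨a1, a2⟩, b1, b2⟩ := inv t
    rw [h3]
    nlinarith [sq_nonneg (z1 t + z2 t), sq_nonneg (z3 t - 6)]
  -- exact computation up to t = 7
  have e11 : z1 1 = -3/4 := by rw [h1, h10]; norm_num
  have e21 : z2 1 = -3/4 := by rw [h2, h10, h20]; norm_num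
  have e31 : z3 1 = -3/4 := by rw [h3, h10, h20, h30]; norm_num
  have e12 : z1 2 = -3/16 := by have h := h1 1; rw [e11] at h; norm_num at h; linarith [h]
  have e22 : z2 2 = -3/4 := by have h := h2 1; rw [e11, e21] at h; norm_num at h; linarith [h]
  have e32 : z3 2 = -3/16 := by have h := h3 1; rw [e11, e21, e31] at h; norm_num at h; linarith [h]
  have e13 : z1 3 = -183/256 := by have h := h1 2; rw [e12] at h; norm_num at h; linarith [h]
  have e23 : z2 3 = -111/256 := by have h := h2 2; rw [e12, e22] at h; norm_num at h; linarith [h]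
  have e33 : z3 3 = -3/16 := by have h := h3 2; rw [e12, e22, e32] at h; norm_num at h; linarith [h]
  have e14 : z1 4 = -15663/65536 := by have h := h1 3; rw [e13] at h; norm_num at h; linarith [h]
  have e24 : z2 4 = -687/1024 := by have h := h2 3; rw [e13, e23] at h; norm_num at h; linarith [h]
  have e34 : z3 4 = 2841/16384 := by have h := h3 3; rw [e13, e23, e33] at h; norm_num at h; linarith [h]
  have e15 : z1 5 = -2975895903/4294967296 := by have h := h1 4; rw [e14] at h; norm_num at h; linarith [h]
  have e25 : z2 5 = -2420052447/4294967296 := by have h := h2 4; rw [e14, e24] at h; norm_num at h; linarith [h]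
  have e35 : z3 5 = 1819064553/4294967296 := by have h := h3 4; rw [e14, e24, e34] at h; norm_num at h; linarith [h]
  have e16 : z1 6 = -4979101629789978303/18446744073709551616 := by
    have h := h1 5; rw [e15] at h; norm_num at h; linarith [h]
  have e26 : z2 6 = -825567389386239/1125899906842624 := by
    have h := h2 5; rw [e15, e25] at h; norm_num at h; linarith [h]
  have e36 : z3 6 = 38221353135174323697/18446744073709551616 := by
    have h := h3 5; rw [e15, e25, e35] at h; norm_num at h; linarith [h]
  have e37 : z3 7 = 11573007026245066037536655922570608889/1329227995784915872903807060280344576 := by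
    have h := h3 6; rw [e16, e26, e36] at h; norm_num at h; linarith [h]
  have base : (6:ℝ) ≤ z3 7 := by rw [e37]; norm_num
  clear e11 e21 e31 e12 e22 e32 e13 e23 e33 e14 e24 e34 e15 e25 e35 e16 e26 e36 e37
  have grow : ∀ n : ℕ, 6 + n ≤ z3 (7 + n) := by
    intro n
    induction n with
    | zero => simpa using base
    | succ m ih =>
      have h6 : (6:ℝ) ≤ z3 (7 + m) := by
        have : (0:ℝ) ≤ m := Nat.cast_nonneg m
        linarith
      have hs := step (7 + m) h6
      rw [show 7 + (m + 1) = (7 + m) + 1 from rfl]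
      push_cast
      push_cast at ih
      linarith
  rintro ⟨B, hB⟩
  have hn : (B:ℝ) ≤ ⌈B⌉₊ := Nat.le_ceil B
  have := grow ⌈B⌉₊
  have habs := hB (7 + ⌈B⌉₊)
  have : z3 (7 + ⌈B⌉₊) ≤ B := le_trans (le_abs_self _) habs
  linarith
end
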